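/- arXiv:1110.5770 — 3 statements merged into one kernel-verified Lean document; each statement's English description precedes it below -/
import Mathlib

section
/- For n ∈ {11, 13, 15}, every vertex coloring of the cycle C_n using at most ⌈n/2⌉ − 2 colors fails to make C_n rainbow vertex-connected; consequently rvc(C_n) ≥ ⌈n/2⌉ − 1 for these values of n. -/
/-- The list of internal vertices of a walk (its support minus the two ends). -/
def SimpleGraph.Walk.internalVertices {V : Type*} {G : SimpleGraph V} {u v : V}
    (p : G.Walk u v) : List V :=
  p.support.tail.dropLast

/-- A walk is a *rainbow path* w.r.t. a vertex coloring `c` if it is a path and its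
internal vertices receive pairwise distinct colors. -/
def SimpleGraph.Walk.IsRainbowPath {V α : Type*} {G : SimpleGraph V} {u v : V}
    (c : V → α) (p : G.Walk u v) : Prop :=
  p.IsPath ∧ (p.internalVertices.map c).Nodup

/-- A vertex-colored graph is *rainbow vertex-connected* if every pair of distinct
vertices is joined by at least one rainbow path. -/
def SimpleGraph.RainbowVertexConnected {V α : Type*} (G : SimpleGraph V) (c : V → α) : Prop :=
  ∀ u v : V, u ≠ v → ∃ p : G.Walk u v, p.IsRainbowPath c

/-- `G` can be made rainbow vertex-connected using at most `k` colors: there is a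
vertex coloring such that every pair of distinct vertices is joined by a rainbow path
all of whose internal vertices have colors among `0, …, k-1`. -/
def SimpleGraph.RVCWith {V : Type*} (G : SimpleGraph V) (k : ℕ) : Prop :=
  ∃ c : V → ℕ, ∀ u v : V, u ≠ v → ∃ p : G.Walk u v,
    p.IsRainbowPath c ∧ ∀ w ∈ p.internalVertices, c w < k

/-- The *rainbow vertex-connection number* `rvc G`: the minimum number of colors
needed to make `G` rainbow vertex-connected. -/
noncomputable def SimpleGraph.rvc {V : Type*} (G : SimpleGraph V) : ℕ :=
  sInf {k | G.RVCWith k}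

/-- A walk is a *revised rainbow path* w.r.t. a vertex coloring `c` if it is a path and
all of its vertices have distinct colors except that the two end vertices may share a
color. -/
def SimpleGraph.Walk.IsRevisedRainbowPath {V α : Type*} {G : SimpleGraph V} {u v : V}
    (c : V → α) (p : G.Walk u v) : Prop :=
  p.IsPath ∧ (p.support.dropLast.map c).Nodup ∧ (p.support.tail.map c).Nodup

/-- A vertex-colored graph is *revised rainbow vertex-connected* if every pair of
distinct vertices is joined by at least one revised rainbow path. -/
def SimpleGraph.RevisedRainbowVertexConnected {V α : Type*} (G : SimpleGraph V)
    (c : V → α) : Prop :=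
  ∀ u v : V, u ≠ v → ∃ p : G.Walk u v, p.IsRevisedRainbowPath c

/-- The *revised rainbow vertex-connection number* `rvc* G`. -/
noncomputable def SimpleGraph.rvcStar {V : Type*} (G : SimpleGraph V) : ℕ :=
  sInf {k | ∃ c : V → Fin k, G.RevisedRainbowVertexConnected c}

/-- A *cut vertex*: a vertex whose removal disconnects the graph. -/
def SimpleGraph.IsCutVertex {V : Type*} (G : SimpleGraph V) (v : V) : Prop :=
  ¬ (G.induce {u | u ≠ v}).Preconnected

/-- A *block* of `G`: a maximal (induced) connected subgraph without a cut vertex,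
described by its vertex set. -/
def SimpleGraph.IsBlock {V : Type*} (G : SimpleGraph V) (B : Set V) : Prop :=
  (G.induce B).Connected ∧ (∀ v, ¬ (G.induce B).IsCutVertex v) ∧
    ∀ C : Set V, B ⊆ C → (G.induce C).Connected →
      (∀ v, ¬ (G.induce C).IsCutVertex v) → C = B


/-!
In `C (2 d + 3)` the vertices `a - 1` and `a + d` are joined by two arcs, with `d` and `d + 1` inner
vertices. With at most `d` colors only the short arc can be rainbow, so every window of `d`
consecutive vertices is rainbow and therefore shows every color exactly once. Sliding a window by
one step gives `c (a + d) = c a`; as `3 d ≡ d - 3 (mod 2 d + 3)`, also `c (a + (d - 3)) = c a`,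
two equal colors inside one window as soon as `d ≥ 4`.
-/

lemma List.Nodup.mem_of_ncard_le {β : Type*} {l : List β} {s : Set β} (hl : l.Nodup)
    (hs : s.Finite) (hls : ∀ x ∈ l, x ∈ s) (h : s.ncard ≤ l.length) {x : β} (hx : x ∈ s) :
    x ∈ l := by
  classical
  have hl_eq : (l.toFinset : Set β) = s := by
    refine Set.eq_of_subset_of_ncard_le (fun y hy => hls y (by simpa using hy)) ?_ hs
    rwa [Set.ncard_coe_finset, List.toFinset_card_of_nodup hl]
  simpa [← hl_eq] using hx

open scoped Fin.CommRing in
lemma Fin.natCast_ne_zero_of_pos_of_lt {n m : ℕ} [NeZero n] (h0 : 0 < m) (hm : m < n) :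
    (m : Fin n) ≠ 0 := fun h => by
  have := Nat.le_of_dvd h0 (Fin.natCast_eq_zero.mp h)
  omega

namespace SimpleGraph

variable {V : Type*} {G : SimpleGraph V}

namespace Walk

variable {u v : V}

lemma support_eq_map_getVert (p : G.Walk u v) :
    p.support = (List.range (p.length + 1)).map p.getVert := by
  induction p with
  | nil => rfl
  | cons h q ih =>
    rw [support_cons, length_cons, List.range_succ_eq_map, List.map_cons, List.map_map, ih]
    simp [Function.comp_def, getVert_cons_succ]

lemma internalVertices_eq_map_getVert (p : G.Walk u v) :
    p.internalVertices = (List.range (p.length - 1)).map fun k => p.getVert (k + 1) := by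
  rw [internalVertices, support_eq_map_getVert, List.range_succ_eq_map, List.map_cons,
    List.tail_cons, List.map_map]
  cases hL : p.length with
  | zero => simp
  | succ L =>
    rw [List.range_succ, List.map_append, List.map_singleton, List.dropLast_concat]
    simp [Function.comp_def]

lemma length_internalVertices (p : G.Walk u v) : p.internalVertices.length = p.length - 1 := by
  simp [internalVertices, length_support]

lemma IsRainbowPath.length_le_ncard_range_add_one [Finite V] {α : Type*} {c : V → α}
    {p : G.Walk u v} (hp : p.IsRainbowPath c) : p.length ≤ (Set.range c).ncard + 1 := by
  classical
  have hcolors : ((p.internalVertices.map c).toFinset : Set α) ⊆ Set.range c := by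
    intro x hx
    obtain ⟨w, -, rfl⟩ := List.mem_map.mp (List.mem_toFinset.mp hx)
    exact Set.mem_range_self w
  have := Set.ncard_le_ncard hcolors (Set.finite_range c)
  rw [Set.ncard_coe_finset, List.toFinset_card_of_nodup hp.2, List.length_map,
    length_internalVertices] at this
  omega

end Walk

section RVC

variable {k m : ℕ}

lemma RVCWith.mono (h : G.RVCWith k) (hkm : k ≤ m) : G.RVCWith m := by
  obtain ⟨c, hc⟩ := h
  refine ⟨c, fun u v huv => ?_⟩
  obtain ⟨p, hp, hlt⟩ := hc u v huv
  exact ⟨p, hp, fun w hw => (hlt w hw).trans_le hkm⟩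

/-- Colors `≥ k` occur only on end vertices of the chosen paths, so they can be merged into
color `0`. -/
lemma RVCWith.exists_rainbowVertexConnected (h : G.RVCWith k) (hk : 0 < k) :
    ∃ c : V → ℕ, (Set.range c).ncard ≤ k ∧ G.RainbowVertexConnected c := by
  obtain ⟨c, hc⟩ := h
  refine ⟨fun v => if c v < k then c v else 0, ?_, fun u v huv => ?_⟩
  · have hsub : Set.range (fun v => if c v < k then c v else 0) ⊆ Set.Iio k := by
      rintro _ ⟨v, rfl⟩
      dsimp only
      split_ifs <;> simp [*]
    simpa using Set.ncard_le_ncard hsub (Set.finite_Iio k)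
  · obtain ⟨p, ⟨hpath, hnodup⟩, hlt⟩ := hc u v huv
    refine ⟨p, hpath, ?_⟩
    rwa [List.map_congr_left fun w hw => if_pos (hlt w hw)]

lemma Preconnected.rvcWith_natCard [Finite V] (hG : G.Preconnected) : G.RVCWith (Nat.card V) := by
  classical
  let e := Finite.equivFin V
  refine ⟨fun v => e v, fun u v _ => ?_⟩
  obtain ⟨q⟩ := hG u v
  let p := q.toPath
  have hsub : p.1.internalVertices.Sublist p.1.support :=
    (List.dropLast_sublist _).trans (List.tail_sublist _)
  refine ⟨p.1, ⟨p.2, ?_⟩, fun w _ => (e w).is_lt⟩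
  exact (hsub.nodup p.2.support_nodup).map (Fin.val_injective.comp e.injective)

lemma Preconnected.lt_rvc [Finite V] (hG : G.Preconnected) (hk : 0 < k)
    (h : ∀ c : V → ℕ, (Set.range c).ncard ≤ k → ¬ G.RainbowVertexConnected c) : k < G.rvc := by
  by_contra! hle
  have hrvc : G.RVCWith G.rvc := Nat.sInf_mem (s := {k | G.RVCWith k}) ⟨_, hG.rvcWith_natCard⟩
  obtain ⟨c, hc, hrc⟩ := (hrvc.mono hle).exists_rainbowVertexConnected hk
  exact h c hc hrc

end RVC

open scoped Fin.CommRing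

lemma cycleGraph_adj_iff_eq_add {n : ℕ} {u w : Fin (n + 2)} :
    (cycleGraph (n + 2)).Adj u w ↔ ∃ t : Fin (n + 2), (t = 1 ∨ t = -1) ∧ w = u + t := by
  rw [cycleGraph_adj]
  constructor
  · rintro (h | h)
    · exact ⟨-1, Or.inr rfl, by rw [← h]; ring⟩
    · exact ⟨1, Or.inl rfl, by rw [← h]; ring⟩
  · rintro ⟨t, rfl | rfl, rfl⟩
    · exact Or.inr (by ring)
    · exact Or.inl (by ring)

lemma Walk.IsPath.exists_cycleGraph_getVert_eq {n : ℕ} {u v : Fin (n + 2)}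
    {p : (cycleGraph (n + 2)).Walk u v} (hp : p.IsPath) :
    ∃ s : Fin (n + 2), (s = 1 ∨ s = -1) ∧ ∀ k ≤ p.length, p.getVert k = u + k * s := by
  induction p with
  | nil => exact ⟨1, Or.inl rfl, fun k hk => by simp_all⟩
  | @cons u w v h q ih =>
    obtain ⟨hq, hu⟩ := Walk.cons_isPath_iff _ _ |>.mp hp
    obtain ⟨t, ht, rfl⟩ := cycleGraph_adj_iff_eq_add.mp h
    obtain ⟨s, hs, hq⟩ := ih hq
    have hst : q.length ≠ 0 → s = t := by
      intro hq0
      by_contra hne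
      -- turning back would revisit `u`
      have hback : q.getVert 1 = u := by
        rw [hq 1 (by omega)]
        rcases hs with rfl | rfl <;> rcases ht with rfl | rfl <;>
          first | exact absurd rfl hne | ring
      exact hu (hback ▸ q.getVert_mem_support 1 :)
    refine ⟨t, ht, fun k hk => ?_⟩
    cases k with
    | zero => simp
    | succ k =>
      rw [Walk.getVert_cons_succ]
      rcases Nat.eq_zero_or_pos q.length with hq0 | hq0
      · rw [Walk.length_cons] at hk
        obtain rfl : k = 0 := by omega
        simp [Walk.getVert_zero]
      · rw [hq k (by simpa using hk), hst hq0.ne']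
        push_cast
        ring

section OddCycle

variable {d : ℕ} {α : Type*} {c : Fin (2 * d + 3) → α}

lemma RainbowVertexConnected.nodup_window_cycleGraph (hc : (Set.range c).ncard ≤ d)
    (h : (cycleGraph (2 * d + 3)).RainbowVertexConnected c) (a : Fin (2 * d + 3)) :
    ((List.range d).map fun i : ℕ => c (a + i)).Nodup := by
  have hne : a - 1 ≠ a + d := fun h => by
    refine Fin.natCast_ne_zero_of_pos_of_lt (n := 2 * d + 3) (m := d + 1) (by omega) (by omega) ?_
    push_cast
    linear_combination -h
  obtain ⟨p, hp⟩ := h _ _ hne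
  have hlen := hp.length_le_ncard_range_add_one
  obtain ⟨s, hs, hget⟩ := hp.1.exists_cycleGraph_getVert_eq
  have hend := hget p.length le_rfl
  rw [Walk.getVert_length] at hend
  rcases hs with rfl | rfl
  · have hL : p.length = d + 1 := by
      have h' : (p.length : Fin (2 * d + 3)) = ((d + 1 : ℕ) : Fin (2 * d + 3)) := by
        push_cast
        linear_combination -hend
      have := congrArg Fin.val h'
      rwa [Fin.val_cast_of_lt (by omega), Fin.val_cast_of_lt (by omega)] at this
    have hnodup := hp.2
    rw [Walk.internalVertices_eq_map_getVert, List.map_map, hL, Nat.add_sub_cancel] at hnodup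
    convert hnodup using 1
    refine List.map_congr_left fun k hk => ?_
    rw [Function.comp_apply, hget (k + 1) (by simp at hk; omega)]
    push_cast
    ring_nf
  · refine absurd ?_ (Fin.natCast_ne_zero_of_pos_of_lt (n := 2 * d + 3)
      (m := p.length + (d + 1)) (by omega) (by omega))
    push_cast
    linear_combination hend

variable (hwin : ∀ a, ((List.range d).map fun i : ℕ => c (a + i)).Nodup)
include hwin

lemma injOn_window_of_nodup (a : Fin (2 * d + 3)) :
    Set.InjOn (fun i : ℕ => c (a + i)) (Set.Iio d) := fun i hi j hj hij =>
  (List.nodup_map_iff_inj_on List.nodup_range).mp (hwin a) i (by simpa using hi) j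
    (by simpa using hj) hij

lemma apply_add_eq_of_nodup_window (hc : (Set.range c).ncard ≤ d) (a : Fin (2 * d + 3)) :
    c (a + d) = c a := by
  obtain ⟨i, hi, hci⟩ : ∃ i < d, c (a + 1 + i) = c a := by
    simpa using (hwin (a + 1)).mem_of_ncard_le (Set.finite_range c)
      (fun x hx => by obtain ⟨i, -, rfl⟩ := List.mem_map.mp hx; exact Set.mem_range_self _)
      (by simpa using hc) (Set.mem_range_self a)
  have hid : i + 1 = d := by
    by_contra hne
    have := injOn_window_of_nodup hwin a (Set.mem_Iio.mpr (by omega : i + 1 < d))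
      (Set.mem_Iio.mpr hi.pos)
      (by beta_reduce; rw [Nat.cast_zero, add_zero, ← hci]; push_cast; ring_nf)
    omega
  rw [← hci, show (d : Fin (2 * d + 3)) = ((i + 1 : ℕ) : Fin (2 * d + 3)) from congrArg _ hid.symm]
  push_cast
  ring_nf

end OddCycle

theorem not_rainbowVertexConnected_cycleGraph {d : ℕ} (hd : 4 ≤ d) {α : Type*}
    (c : Fin (2 * d + 3) → α) (hc : (Set.range c).ncard ≤ d) :
    ¬ (cycleGraph (2 * d + 3)).RainbowVertexConnected c := fun h => by
  have hwin := h.nodup_window_cycleGraph hc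
  have hper := apply_add_eq_of_nodup_window hwin hc
  have hshift : ((0 : Fin (2 * d + 3)) + ((d - 3 : ℕ) : Fin (2 * d + 3))) = 0 + d + d + d := by
    have hN : ((2 * d + 3 : ℕ) : Fin (2 * d + 3)) = 0 := Fin.natCast_self _
    push_cast [Nat.cast_sub (by omega : 3 ≤ d)] at hN ⊢
    linear_combination -hN
  have := injOn_window_of_nodup hwin 0 (Set.mem_Iio.mpr (by omega : d - 3 < d))
    (Set.mem_Iio.mpr (by omega : 0 < d)) (by beta_reduce; rw [hshift, hper, hper, hper]; simp)
  omega

end SimpleGraph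

/-- for `n ∈ {11, 13, 15}`, every vertex coloring of `Cₙ` using at most
`⌈n/2⌉ - 2` colors fails to make `Cₙ` rainbow vertex-connected; hence
`rvc (Cₙ) ≥ ⌈n/2⌉ - 1`.  (Here `⌈n/2⌉ = (n + 1) / 2` with natural division.) -/
theorem ceil_half_sub_one_le_rvc_cycleGraph (n : ℕ) (hn : n = 11 ∨ n = 13 ∨ n = 15) :
    (∀ {α : Type*} (c : Fin n → α), (Set.range c).ncard ≤ (n + 1) / 2 - 2 →
      ¬ (SimpleGraph.cycleGraph n).RainbowVertexConnected c) ∧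
    (n + 1) / 2 - 1 ≤ (SimpleGraph.cycleGraph n).rvc := by
  obtain ⟨d, hd, rfl⟩ : ∃ d, 4 ≤ d ∧ n = 2 * d + 3 := by
    rcases hn with rfl | rfl | rfl
    exacts [⟨4, le_rfl, rfl⟩, ⟨5, by norm_num, rfl⟩, ⟨6, by norm_num, rfl⟩]
  rw [show (2 * d + 3 + 1) / 2 - 2 = d by omega, show (2 * d + 3 + 1) / 2 - 1 = d + 1 by omega]
  exact ⟨SimpleGraph.not_rainbowVertexConnected_cycleGraph hd,
    SimpleGraph.cycleGraph_preconnected.lt_rvc (by omega)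
      (SimpleGraph.not_rainbowVertexConnected_cycleGraph hd)⟩
end

section
/- The cycle C_9 on 9 vertices satisfies rvc(C_9) = 3. -/
/-!
The internal vertices of a rainbow path coloured from `k` colours are pairwise distinct in
colour, so there are at most `k` of them and any two vertices lie at distance at most `k + 1`.
In `C_9` the vertices `0` and `4` are at distance `4`, hence two colours do not suffice.
Conversely, colour vertex `i` by `i % 3`: the shorter arc between two vertices has length at most
`4`, so its at most three internal vertices are consecutive on the cycle, and since `3 ∣ 9`
consecutive vertices have distinct residues even across the wrap-around.
-/

namespace SimpleGraph

variable {V : Type*} {G : SimpleGraph V}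

lemma Walk.length_internalVertices_s5 {u v : V} (p : G.Walk u v) :
    p.internalVertices.length = p.length - 1 := by
  simp [Walk.internalVertices]

lemma Walk.add_length_le_of_adj_le {f : V → ℕ} (hf : ∀ x y, G.Adj x y → f x ≤ f y + 1)
    {u v : V} (p : G.Walk u v) : f u ≤ f v + p.length := by
  induction p with
  | nil => simp
  | cons h _ ih => rw [Walk.length_cons]; linarith [hf _ _ h]

lemma le_dist_add_of_adj_le {f : V → ℕ} (hf : ∀ x y, G.Adj x y → f x ≤ f y + 1) {u v : V}
    (h : G.Reachable u v) : f u ≤ f v + G.dist u v := by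
  obtain ⟨p, hp⟩ := h.exists_walk_length_eq_dist
  exact hp ▸ p.add_length_le_of_adj_le hf

lemma RVCWith.mono_s5 {k l : ℕ} (h : G.RVCWith k) (hkl : k ≤ l) : G.RVCWith l := by
  obtain ⟨c, hc⟩ := h
  refine ⟨c, fun u v huv => ?_⟩
  obtain ⟨p, hp, hlt⟩ := hc u v huv
  exact ⟨p, hp, fun w hw => (hlt w hw).trans_le hkl⟩

lemma RVCWith.dist_le {k : ℕ} (h : G.RVCWith k) {u v : V} (huv : u ≠ v) :
    G.dist u v ≤ k + 1 := by
  obtain ⟨c, hc⟩ := h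
  obtain ⟨p, ⟨-, hnd⟩, hlt⟩ := hc u v huv
  have hsub : p.internalVertices.map c ⊆ List.range k := by
    intro i hi
    obtain ⟨w, hw, rfl⟩ := List.mem_map.1 hi
    exact List.mem_range.2 (hlt w hw)
  have hint : p.internalVertices.length ≤ k := by
    simpa using (hnd.subperm hsub).length_le
  rw [p.length_internalVertices_s5] at hint
  exact (G.dist_le p).trans (by omega)

lemma rvc_eq_succ {k : ℕ} (h : G.RVCWith (k + 1)) (h' : ¬ G.RVCWith k) : G.rvc = k + 1 :=
  le_antisymm (Nat.sInf_le h) <| le_csInf ⟨_, h⟩ fun _ hl =>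
    Nat.succ_le_of_lt <| lt_of_not_ge fun hlk => h' (RVCWith.mono_s5 hl hlk)

open Fin.NatCast

def cycleGraphArc {n : ℕ} (u : Fin (n + 2)) : (k : ℕ) → (cycleGraph (n + 2)).Walk u (u + k)
  | 0 => Walk.nil.copy rfl (by simp)
  | k + 1 =>
    (Walk.cons (cycleGraph_adj.2 (Or.inr (by simp))) (cycleGraphArc (u + 1) k)).copy rfl
      (by push_cast; abel)

def cycleGraphShortArc {n : ℕ} (u v : Fin (n + 2)) : (cycleGraph (n + 2)).Walk u v :=
  if (v - u).val ≤ (u - v).val then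
    (cycleGraphArc u (v - u).val).copy rfl (by simp [Fin.cast_val_eq_self])
  else
    ((cycleGraphArc v (u - v).val).copy rfl (by simp [Fin.cast_val_eq_self])).reverse

lemma cycleGraph_nine_rvcWith_three : (cycleGraph 9).RVCWith 3 := by
  refine ⟨fun i => i.val % 3, fun u v huv => ⟨cycleGraphShortArc u v, ⟨?_, ?_⟩, ?_⟩⟩
  · rw [Walk.isPath_def]
    revert u v
    decide
  · revert u v
    decide
  · exact fun w _ => Nat.mod_lt _ (by norm_num)

lemma cycleGraph_nine_four_le_dist : 4 ≤ (cycleGraph 9).dist 0 4 := by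
  -- `min x (9 - x)` is the distance from `0` along the cycle, so it changes by at most 1 per edge.
  have := le_dist_add_of_adj_le (f := fun x : Fin 9 => min x.val (9 - x.val)) (by decide)
    (cycleGraph_preconnected 4 0)
  simpa [dist_comm] using this

end SimpleGraph

/-- `rvc (C₉) = 3`. -/
theorem rvc_cycleGraph_nine : (SimpleGraph.cycleGraph 9).rvc = 3 := by
  refine SimpleGraph.rvc_eq_succ SimpleGraph.cycleGraph_nine_rvcWith_three fun h => ?_
  have hle : (SimpleGraph.cycleGraph 9).dist 0 4 ≤ 2 + 1 := h.dist_le (by decide)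
  have hge := SimpleGraph.cycleGraph_nine_four_le_dist
  omega
end

section
/- For every odd n ≥ 3, the cycle C_n admits a vertex coloring with ⌈n/2⌉ colors, in which every color appears at most twice, that makes C_n revised rainbow vertex-connected; hence rvc*(C_n) ≤ ⌈n/2⌉ for odd n. -/
/-
Colour vertex `i` of `C_{2m-1}` by `i mod m`. Two distinct vertices of equal colour differ by
exactly `m`, so they lie at cyclic distance `m - 1`. Hence along an arc of at most `m - 1` edges
only the two end vertices can share a colour, and any two vertices are joined by such an arc
(the shorter of the two arcs between them). Each colour class is `{i, i + m} ∩ [0, 2m - 1)`.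
-/

open SimpleGraph Fin.NatCast

lemma List.nodup_map_range_of_injOn {β : Type*} {g : ℕ → β} {l : ℕ}
    (hg : Set.InjOn g (Set.Iio l)) : ((List.range l).map g).Nodup :=
  List.nodup_range.map_on fun i hi j hj => hg (by simpa using hi) (by simpa using hj)

namespace SimpleGraph.Walk

variable {V α : Type*} {G : SimpleGraph V} {u v : V} {c : V → α}

lemma IsRevisedRainbowPath.reverse {p : G.Walk u v} (h : p.IsRevisedRainbowPath c) :
    p.reverse.IsRevisedRainbowPath c := by
  obtain ⟨hp, hinit, htail⟩ := h
  refine ⟨hp.reverse, ?_, ?_⟩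
  · rwa [support_reverse, List.dropLast_reverse, List.map_reverse, List.nodup_reverse]
  · rwa [support_reverse, List.tail_reverse, List.map_reverse, List.nodup_reverse]

lemma exists_support_eq_map_range (f : ℕ → V) (k : ℕ)
    (hadj : ∀ i < k, G.Adj (f i) (f (i + 1))) :
    ∃ p : G.Walk (f 0) (f k), p.support = (List.range (k + 1)).map f := by
  induction k with
  | zero => exact ⟨nil, rfl⟩
  | succ k ih =>
    obtain ⟨p, hp⟩ := ih fun i hi => hadj i (by omega)
    refine ⟨p.concat (hadj k k.lt_succ_self), ?_⟩
    rw [support_concat, hp, List.range_succ (n := k + 1), List.map_append]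
    rfl

lemma exists_isRevisedRainbowPath_of_injOn (f : ℕ → V) (k : ℕ) (hu : f 0 = u) (hv : f k = v)
    (hadj : ∀ i < k, G.Adj (f i) (f (i + 1))) (hf : Set.InjOn f (Set.Iio (k + 1)))
    (hinit : Set.InjOn (fun i => c (f i)) (Set.Iio k))
    (htail : Set.InjOn (fun i => c (f (i + 1))) (Set.Iio k)) :
    ∃ p : G.Walk u v, p.IsRevisedRainbowPath c := by
  subst hu hv
  obtain ⟨p, hp⟩ := exists_support_eq_map_range f k hadj
  refine ⟨p, IsPath.mk' ?_, ?_, ?_⟩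
  · rw [hp]
    exact List.nodup_map_range_of_injOn hf
  · rw [hp, List.range_succ, List.map_append, List.map_singleton, List.dropLast_concat,
      List.map_map]
    exact List.nodup_map_range_of_injOn hinit
  · rw [hp, List.range_succ_eq_map, List.map_cons, List.tail_cons, List.map_map, List.map_map]
    exact List.nodup_map_range_of_injOn htail

end SimpleGraph.Walk

lemma Nat.eq_or_add_eq_of_mod_eq {x y m : ℕ} (hx : x < 2 * m) (hy : y < 2 * m)
    (h : x % m = y % m) : x = y ∨ x + m = y ∨ y + m = x := by
  have hx' := Nat.mod_add_div x m
  have hy' := Nat.mod_add_div y m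
  have : x / m < 2 := Nat.div_lt_of_lt_mul (by omega)
  have : y / m < 2 := Nat.div_lt_of_lt_mul (by omega)
  interval_cases x / m <;> interval_cases y / m <;> omega

section cycleGraph

variable {n : ℕ}

def cycleColoring (m : ℕ) [NeZero m] (v : Fin n) : Fin m :=
  Fin.ofNat m v

lemma Fin.val_sub_add_val_sub {u v : Fin n} (h : u ≠ v) : (v - u).val + (u - v).val = n := by
  have hvu := Fin.intCast_val_sub_eq_sub_add_ite v u
  have huv := Fin.intCast_val_sub_eq_sub_add_ite u v
  have : u.val ≠ v.val := Fin.val_ne_of_ne h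
  split_ifs at hvu huv <;> omega

variable {m : ℕ} [NeZero m]

lemma card_filter_cycleColoring_eq_le_two (hnm : n ≤ 2 * m) (x : Fin m) :
    (Finset.univ.filter fun v : Fin n => cycleColoring m v = x).card ≤ 2 := by
  calc (Finset.univ.filter fun v : Fin n => cycleColoring m v = x).card
      ≤ (Finset.range 2).card := by
        refine Finset.card_le_card_of_injOn (fun v => v.val / m) ?_ ?_
        · intro v _
          simpa using Nat.div_lt_of_lt_mul (show v.val < m * 2 by omega)
        · intro v hv w hw hdiv
          simp only [Finset.coe_filter, Finset.mem_univ, true_and, Set.mem_ofPred_eq] at hv hw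
          have hmod : v.val % m = w.val % m := by
            simpa [cycleColoring, Fin.ext_iff] using hv.trans hw.symm
          exact Fin.ext (Nat.ext_div_modEq hdiv hmod)
    _ = 2 := Finset.card_range 2

variable [NeZero n]

lemma Fin.injOn_add_natCast (u : Fin n) :
    Set.InjOn (fun t : ℕ => u + (t : Fin n)) (Set.Iio n) := by
  intro t ht s hs h
  simpa [Nat.mod_eq_of_lt ht, Nat.mod_eq_of_lt hs] using congrArg Fin.val (add_left_cancel h)

lemma cycleGraph_adj_add_one (hn : 2 ≤ n) (u : Fin n) : (cycleGraph n).Adj u (u + 1) := by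
  rw [cycleGraph_adj', add_sub_cancel_left, Fin.val_one', Nat.mod_eq_of_lt hn]
  exact Or.inr rfl

lemma cycleColoring_ne_add (hnm : n + 1 = 2 * m) (v : Fin n) {d : ℕ} (hd0 : 0 < d)
    (hd : d < m - 1) : cycleColoring m v ≠ cycleColoring m (v + (d : Fin n)) := by
  intro h
  have hsum := Fin.val_add_eq_ite v (d : Fin n)
  rw [Fin.val_natCast, Nat.mod_eq_of_lt (by omega)] at hsum
  have hmod : v.val % m = (v + (d : Fin n)).val % m := by
    simpa [cycleColoring, Fin.ext_iff] using h
  have := Nat.eq_or_add_eq_of_mod_eq (x := v.val) (y := (v + (d : Fin n)).val)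
    (by have := v.isLt; omega) (by have := (v + (d : Fin n)).isLt; omega) hmod
  split_ifs at hsum <;> omega

lemma injOn_cycleColoring_add (hnm : n + 1 = 2 * m) (u : Fin n) :
    Set.InjOn (fun t : ℕ => cycleColoring m (u + (t : Fin n))) (Set.Iio (m - 1)) := by
  have key {t s : ℕ} (hts : t < s) (hs : s < m - 1) :
      cycleColoring m (u + (t : Fin n)) ≠ cycleColoring m (u + (s : Fin n)) := by
    have hshift : u + (t : Fin n) + ((s - t : ℕ) : Fin n) = u + s := by
      rw [add_assoc, ← Nat.cast_add, Nat.add_sub_cancel' hts.le]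
    simpa [hshift] using cycleColoring_ne_add hnm (u + t) (d := s - t) (by omega) (by omega)
  intro t ht s hs h
  by_contra hne
  exact (Nat.lt_or_gt_of_ne hne).elim (key · hs h) (key · ht h.symm)

lemma exists_isRevisedRainbowPath_cycleColoring (hnm : n + 1 = 2 * m) {u v : Fin n}
    (huv : (v - u).val ≤ m - 1) :
    ∃ p : (cycleGraph n).Walk u v, p.IsRevisedRainbowPath (cycleColoring m) := by
  have hv : u + (((v - u).val : ℕ) : Fin n) = v := by
    rw [Fin.cast_val_eq_self, add_sub_cancel]
  have hshift : (fun i : ℕ => cycleColoring m (u + ((i + 1 : ℕ) : Fin n))) =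
      fun i : ℕ => cycleColoring m (u + 1 + (i : Fin n)) := by
    funext i
    rw [Nat.cast_succ, add_comm (i : Fin n), add_assoc]
  refine Walk.exists_isRevisedRainbowPath_of_injOn (fun t : ℕ => u + (t : Fin n)) (v - u).val
    (by simp) hv
    (fun i hi => by simpa [add_assoc] using cycleGraph_adj_add_one (by omega) (u + (i : Fin n)))
    ((Fin.injOn_add_natCast u).mono fun t ht => ?_)
    ((injOn_cycleColoring_add hnm u).mono fun t ht => ?_)
    (hshift ▸ (injOn_cycleColoring_add hnm (u + 1)).mono fun t ht => ?_) <;>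
  simp only [Set.mem_Iio] at ht ⊢ <;> omega

lemma revisedRainbowVertexConnected_cycleColoring (hnm : n + 1 = 2 * m) :
    (cycleGraph n).RevisedRainbowVertexConnected (cycleColoring m) := by
  intro u v huv
  have hsum := Fin.val_sub_add_val_sub huv
  by_cases h : (v - u).val ≤ m - 1
  · exact exists_isRevisedRainbowPath_cycleColoring hnm h
  · obtain ⟨p, hp⟩ := exists_isRevisedRainbowPath_cycleColoring hnm (u := v) (v := u) (by omega)
    exact ⟨p.reverse, hp.reverse⟩

end cycleGraph

theorem rvcStar_cycleGraph_le_of_odd_general (n : ℕ) (hodd : Odd n) :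
    (∃ c : Fin n → Fin ((n + 1) / 2),
      (∀ x : Fin ((n + 1) / 2), (Finset.univ.filter (fun v => c v = x)).card ≤ 2) ∧
      (SimpleGraph.cycleGraph n).RevisedRainbowVertexConnected c) ∧
    (SimpleGraph.cycleGraph n).rvcStar ≤ (n + 1) / 2 := by
  have hnm : n + 1 = 2 * ((n + 1) / 2) := by
    obtain ⟨j, rfl⟩ := hodd
    omega
  have : NeZero n := ⟨hodd.pos.ne'⟩
  have : NeZero ((n + 1) / 2) := ⟨by omega⟩
  have hconn := revisedRainbowVertexConnected_cycleColoring hnm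
  exact ⟨⟨cycleColoring _, card_filter_cycleColoring_eq_le_two (by omega), hconn⟩,
    Nat.sInf_le ⟨_, hconn⟩⟩

/-- for odd `n ≥ 3`, the cycle `Cₙ` has a revised rainbow
vertex-coloring with `⌈n/2⌉` colors in which every color appears at most twice; hence
`rvc* (Cₙ) ≤ ⌈n/2⌉`.  (Here `⌈n/2⌉ = (n + 1) / 2` with natural division.) -/
theorem rvcStar_cycleGraph_le_of_odd (n : ℕ) (hn : 3 ≤ n) (hodd : Odd n) :
    (∃ c : Fin n → Fin ((n + 1) / 2),
      (∀ x : Fin ((n + 1) / 2), (Finset.univ.filter (fun v => c v = x)).card ≤ 2) ∧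
      (SimpleGraph.cycleGraph n).RevisedRainbowVertexConnected c) ∧
    (SimpleGraph.cycleGraph n).rvcStar ≤ (n + 1) / 2 :=
  rvcStar_cycleGraph_le_of_odd_general n hodd
end
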